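/- arXiv:1510.05731 — 3 statements merged into one kernel-verified Lean document; each statement's English description precedes it below -/
import Mathlib

section
/- For y ≥ 0 and n a positive integer, the integral I(y,n) = ∫_0^1 e^{y(s-1)} s^n ds satisfies |I(y,n) - 1/(y+n)| ≤ 12/(y+n)^2. -/
/-!
Bounding `s ^ y ≤ exp (y * (s - 1))` (from `log s ≤ s - 1`) in each of the two factors of the
integrand sandwiches it between `s ^ (y + n)` and `exp ((y + n) * (s - 1))`, whose integrals over
`[0, 1]` are `1 / (y + n + 1)` and at most `1 / (y + n)`. Hence the integral lies within
`1 / (y + n) - 1 / (y + n + 1) ≤ 1 / (y + n) ^ 2` of `1 / (y + n)`.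
-/

open Real intervalIntegral

lemma rpow_le_exp_mul_sub_one {s a : ℝ} (hs : 0 < s) (ha : 0 ≤ a) :
    s ^ a ≤ exp (a * (s - 1)) := by
  rw [rpow_def_of_pos hs, mul_comm (log s)]
  exact exp_le_exp.mpr (mul_le_mul_of_nonneg_left (log_le_sub_one_of_pos hs) ha)

lemma integral_exp_mul_sub_one {c : ℝ} (hc : c ≠ 0) :
    ∫ s in (0:ℝ)..1, exp (c * (s - 1)) = (1 - exp (-c)) / c := by
  simp_rw [mul_sub, mul_one]
  rw [integral_comp_mul_sub (fun x => exp x) hc, integral_exp]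
  simp [div_eq_inv_mul]

lemma integral_exp_mul_pow_le {y : ℝ} {n : ℕ} (hc : 0 < y + n) :
    ∫ s in (0:ℝ)..1, exp (y * (s - 1)) * s ^ n ≤ 1 / (y + n) := by
  have hle : ∫ s in (0:ℝ)..1, exp (y * (s - 1)) * s ^ n
      ≤ ∫ s in (0:ℝ)..1, exp ((y + n) * (s - 1)) := by
    refine integral_mono_on_of_le_Ioo zero_le_one
      ((by fun_prop : Continuous _).intervalIntegrable _ _)
      ((by fun_prop : Continuous _).intervalIntegrable _ _) fun s hs => ?_
    have hsn : s ^ n ≤ exp (n * (s - 1)) := by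
      simpa [rpow_natCast] using rpow_le_exp_mul_sub_one hs.1 n.cast_nonneg
    calc exp (y * (s - 1)) * s ^ n ≤ exp (y * (s - 1)) * exp (n * (s - 1)) := by gcongr
      _ = exp ((y + n) * (s - 1)) := by rw [← exp_add, add_mul]
  calc _ ≤ _ := hle
    _ = (1 - exp (-(y + n))) / (y + n) := integral_exp_mul_sub_one hc.ne'
    _ ≤ 1 / (y + n) := by gcongr; linarith [exp_pos (-(y + n))]

lemma one_div_add_one_le_integral_exp_mul_pow {y : ℝ} (hy : 0 ≤ y) (n : ℕ) :
    1 / (y + n + 1) ≤ ∫ s in (0:ℝ)..1, exp (y * (s - 1)) * s ^ n := by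
  have hc : 0 ≤ y + n := by positivity
  have hle : ∫ s in (0:ℝ)..1, s ^ (y + n)
      ≤ ∫ s in (0:ℝ)..1, exp (y * (s - 1)) * s ^ n := by
    refine integral_mono_on_of_le_Ioo zero_le_one
      (intervalIntegrable_rpow' (by linarith))
      ((by fun_prop : Continuous _).intervalIntegrable _ _) fun s hs => ?_
    rw [rpow_add hs.1, rpow_natCast]
    exact mul_le_mul_of_nonneg_right (rpow_le_exp_mul_sub_one hs.1 hy)
      (pow_nonneg hs.1.le n)
  calc 1 / (y + n + 1) = ∫ s in (0:ℝ)..1, s ^ (y + n) := by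
        rw [integral_rpow (Or.inl (by linarith)), one_rpow, zero_rpow (by linarith)]
        simp
    _ ≤ _ := hle

theorem stmt_6 (y : ℝ) (hy : 0 ≤ y) (n : ℕ) (hn : 0 < n) :
    |(∫ s in (0:ℝ)..1, Real.exp (y * (s - 1)) * s ^ n) - 1 / (y + n)| ≤ 12 / (y + n) ^ 2 := by
  have hc : 0 < y + n := add_pos_of_nonneg_of_pos hy (Nat.cast_pos.mpr hn)
  have hupper := integral_exp_mul_pow_le (n := n) hc
  have hlower := one_div_add_one_le_integral_exp_mul_pow hy n
  have hgap : 1 / (y + n) - 1 / (y + n + 1) ≤ 12 / (y + n) ^ 2 := by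
    rw [div_sub_div _ _ hc.ne' (by linarith), div_le_div_iff₀ (by positivity) (by positivity)]
    nlinarith
  rw [abs_le]
  constructor <;> linarith [div_nonneg (by norm_num : (0:ℝ) ≤ 12) (sq_nonneg (y + n))]
end

section
/- For the function F(z) = P(e^z) exp(e^z), where P(w) = \sum_{j=0}^{d} (-1)^j w^j/j!, the Schwarzian derivative satisfies S(F)(z) = 2A(z) with A(z) = -(1/4) e^{2z} - (d/2) e^z - (d+1)²/4. -/
/-!
Writing `F = Q ∘ exp` with `Q w = P w * exp w`, the terms of `(P' + P)(w)` telescope to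
`(-1)^d w^d / d!`, so `F' = c * exp φ` with `c = (-1)^d / d!` and `φ z = exp z + (d + 1) z`.
For any `f' = c * exp φ` with `c ≠ 0` one has `f''/f' = φ'` and `f'''/f' = φ'' + φ'^2`, hence
`S(f) = φ'' - φ'^2 / 2`, which for this `φ` is the stated `2A`.
-/

/-- The Schwarzian derivative `S(f) = f'''/f' - (3/2)(f''/f')²`. -/
noncomputable def schwarzian (f : ℂ → ℂ) (z : ℂ) : ℂ :=
  deriv (deriv (deriv f)) z / deriv f z - (3 / 2) * (deriv (deriv f) z / deriv f z) ^ 2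

open Complex

theorem schwarzian_eq_of_hasDerivAt_const_mul_exp {f g g' g'' : ℂ → ℂ} {c : ℂ} (hc : c ≠ 0)
    (hf : ∀ z, HasDerivAt f (c * exp (g z)) z) (hg : ∀ z, HasDerivAt g (g' z) z)
    (hg' : ∀ z, HasDerivAt g' (g'' z) z) (z : ℂ) :
    schwarzian f z = g'' z - g' z ^ 2 / 2 := by
  have hf' : ∀ z, HasDerivAt (fun z => c * exp (g z)) (c * exp (g z) * g' z) z := fun z =>
    ((hg z).cexp.const_mul c).congr_deriv (by ring)
  have hf'' : HasDerivAt (fun z => c * exp (g z) * g' z)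
      (c * exp (g z) * g' z * g' z + c * exp (g z) * g'' z) z := (hf' z).mul (hg' z)
  have d1 : deriv f = fun z => c * exp (g z) := funext fun z => (hf z).deriv
  have d2 : deriv (deriv f) = fun z => c * exp (g z) * g' z := by
    rw [d1]; exact funext fun z => (hf' z).deriv
  rw [schwarzian, d2, hf''.deriv, d1]
  field_simp
  ring

noncomputable def negExpTaylor (d : ℕ) (w : ℂ) : ℂ :=
  ∑ j ∈ Finset.range (d + 1), (-1) ^ j * w ^ j / (Nat.factorial j : ℂ)

theorem hasDerivAt_negExpTaylor_mul_exp (d : ℕ) (w : ℂ) :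
    HasDerivAt (fun w => negExpTaylor d w * exp w)
      ((-1) ^ d * w ^ d / (Nat.factorial d : ℂ) * exp w) w := by
  induction d with
  | zero => simpa [negExpTaylor] using hasDerivAt_exp w
  | succ n ih =>
    have hterm : HasDerivAt
        (fun w => (-1) ^ (n + 1) / (Nat.factorial (n + 1) : ℂ) * (w ^ (n + 1) * exp w))
        ((-1) ^ (n + 1) / (Nat.factorial (n + 1) : ℂ)
          * (((n + 1 : ℕ) : ℂ) * w ^ n * exp w + w ^ (n + 1) * exp w)) w := by
      simpa using ((hasDerivAt_pow (n + 1) w).mul (hasDerivAt_exp w)).const_mul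
        ((-1) ^ (n + 1) / (Nat.factorial (n + 1) : ℂ))
    have hsplit : (fun w => negExpTaylor (n + 1) w * exp w) = fun w =>
        negExpTaylor n w * exp w
          + (-1) ^ (n + 1) / (Nat.factorial (n + 1) : ℂ) * (w ^ (n + 1) * exp w) := by
      funext w
      rw [negExpTaylor, Finset.sum_range_succ, ← negExpTaylor]
      ring
    rw [hsplit]
    refine (ih.add hterm).congr_deriv ?_
    have hn : (Nat.factorial n : ℂ) ≠ 0 := by exact_mod_cast Nat.factorial_ne_zero n
    rw [Nat.factorial_succ]
    push_cast
    field_simp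
    ring

theorem stmt_15 (d : ℕ) (P F : ℂ → ℂ)
    (hP : ∀ w : ℂ, P w = ∑ j ∈ Finset.range (d + 1), (-1) ^ j * w ^ j / (Nat.factorial j : ℂ))
    (hF : ∀ z : ℂ, F z = P (Complex.exp z) * Complex.exp (Complex.exp z)) :
    ∀ z : ℂ, schwarzian F z =
      2 * (-(1/4) * Complex.exp (2 * z) - ((d : ℂ) / 2) * Complex.exp z - ((d : ℂ) + 1) ^ 2 / 4) := by
  have hF_comp : F = fun z => negExpTaylor d (exp z) * exp (exp z) := by
    funext z; rw [hF, hP, negExpTaylor]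
  have hc : (-1) ^ d / (Nat.factorial d : ℂ) ≠ 0 :=
    div_ne_zero (pow_ne_zero _ (by norm_num)) (by exact_mod_cast Nat.factorial_ne_zero d)
  have hF' : ∀ z, HasDerivAt F
      ((-1) ^ d / (Nat.factorial d : ℂ) * exp (exp z + (d + 1) * z)) z := fun z => by
    rw [hF_comp]
    refine ((hasDerivAt_negExpTaylor_mul_exp d (exp z)).comp z (hasDerivAt_exp z)).congr_deriv ?_
    rw [exp_add, add_mul, one_mul, exp_add, ← exp_nat_mul]
    ring
  have hφ : ∀ z, HasDerivAt (fun z => exp z + (d + 1) * z) (exp z + (d + 1)) z := fun z => by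
    simpa using (hasDerivAt_exp z).fun_add ((hasDerivAt_id z).const_mul ((d : ℂ) + 1))
  have hφ' : ∀ z, HasDerivAt (fun z => exp z + ((d : ℂ) + 1)) (exp z) z := fun z =>
    (hasDerivAt_exp z).add_const _
  intro z
  rw [schwarzian_eq_of_hasDerivAt_const_mul_exp hc hF' hφ hφ', two_mul z, exp_add]
  ring
end

section
/- Let γ > 1. There exists a sequence (n_k) of odd positive integers with n_1 = 1 such that the continuous piecewise linear function h: [0,∞) → [0,∞) with h(0) = 0 which is linear with slope n_k on each interval [2π(k-1), 2πk] satisfies h(x) = x^γ + O(x^{γ-2}) + O(1) as x → ∞. -/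
/-!
Choose the slopes greedily: at the node `2πk` the ideal slope, which would make `h` hit `(2πk)^γ`
exactly, is nonnegative because consecutive values of `(2πk)^γ` differ by at least `2π`; an odd
integer within `1` of it keeps every nodal error below `2π` (below `(2π)^γ` counting the first
node). Between nodes `h` is the chord of its nodal values, and by the tangent lines at the two
ends the chord of the convex `x^γ` over `[a, b]` exceeds `x^γ` by at most
`γ (b - a) (b^(γ-1) - a^(γ-1))`, which is `O(x^(γ-2)) + O(1)` for `b - a = 2π`.
-/

open Real

lemma rpow_tangent_le {p u v : ℝ} (hp : 1 ≤ p) (hu : 0 ≤ u) (hv : 0 ≤ v) :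
    u ^ p + p * u ^ (p - 1) * (v - u) ≤ v ^ p := by
  have hderiv : HasDerivAt (fun x : ℝ => x ^ p) (p * u ^ (p - 1)) u :=
    hasDerivAt_rpow_const (Or.inr hp)
  rcases lt_trichotomy u v with huv | rfl | hvu
  · have := (convexOn_rpow hp).le_slope_of_hasDerivAt hu hv huv hderiv
    rw [slope_def_field, le_div_iff₀ (sub_pos.2 huv)] at this
    linarith
  · simp
  · have := (convexOn_rpow hp).slope_le_of_hasDerivAt hv hu hvu hderiv
    rw [slope_def_field, div_le_iff₀ (sub_pos.2 hvu)] at this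
    linarith

lemma le_rpow_add_sub_rpow_of_one_le {γ u d : ℝ} (hγ : 1 ≤ γ) (hu : 1 ≤ u) (hd : 0 ≤ d) :
    d ≤ (u + d) ^ γ - u ^ γ := by
  have hslope : 1 ≤ γ * u ^ (γ - 1) :=
    one_le_mul_of_one_le_of_one_le hγ (one_le_rpow hu (by linarith))
  have htan := rpow_tangent_le hγ (by linarith : (0 : ℝ) ≤ u) (by linarith : 0 ≤ u + d)
  nlinarith [mul_le_mul_of_nonneg_right hslope hd]

lemma rpow_add_le_two_rpow_mul_rpow_add_rpow {q x y : ℝ} (hq : 0 ≤ q) (hx : 0 ≤ x)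
    (hy : 0 ≤ y) :
    (x + y) ^ q ≤ 2 ^ q * (x ^ q + y ^ q) := by
  wlog hxy : x ≤ y generalizing x y
  · rw [add_comm x, add_comm (x ^ q)]
    exact this hy hx (le_of_not_ge hxy)
  calc (x + y) ^ q ≤ (2 * y) ^ q := rpow_le_rpow (by positivity) (by linarith) hq
    _ = 2 ^ q * y ^ q := mul_rpow zero_le_two hy
    _ ≤ 2 ^ q * (x ^ q + y ^ q) := by
      gcongr
      exact le_add_of_nonneg_left (rpow_nonneg hx q)

lemma exists_rpow_add_sub_rpow_le {p d : ℝ} (hp : 0 < p) (hd : 0 ≤ d) :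
    ∃ C ≥ 0, ∀ a x : ℝ, 0 ≤ a → a ≤ x →
      (a + d) ^ p - a ^ p ≤ C * (x ^ (p - 1) + 1) := by
  rcases le_total p 1 with hp1 | hp1
  · refine ⟨d ^ p, by positivity, fun a x ha hax => ?_⟩
    have hsub := rpow_add_le_add_rpow ha hd hp.le hp1
    nlinarith [rpow_nonneg (ha.trans hax) (p - 1), rpow_nonneg hd p]
  · refine ⟨p * d * 2 ^ (p - 1) * (1 + d ^ (p - 1)), by positivity, fun a x ha hax => ?_⟩
    have hx : 0 ≤ x := ha.trans hax
    have htan := rpow_tangent_le hp1 (by positivity : 0 ≤ a + d) ha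
    have hX := rpow_nonneg hx (p - 1)
    have hD := rpow_nonneg hd (p - 1)
    calc (a + d) ^ p - a ^ p ≤ p * d * (a + d) ^ (p - 1) := by linear_combination htan
      _ ≤ p * d * (2 ^ (p - 1) * (x ^ (p - 1) + d ^ (p - 1))) := by
        gcongr
        exact (rpow_le_rpow (by positivity) (by linarith) (by linarith)).trans
          (rpow_add_le_two_rpow_mul_rpow_add_rpow (by linarith) hx hd)
      _ ≤ p * d * (2 ^ (p - 1) * ((1 + d ^ (p - 1)) * (x ^ (p - 1) + 1))) := by
        gcongr
        nlinarith
      _ = _ := by ring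

lemma abs_interpolation_sub_rpow_le {γ a b x ya yb M : ℝ} (hγ : 1 ≤ γ) (ha : 0 ≤ a)
    (hax : a ≤ x) (hxb : x ≤ b) (hab : a < b) (hMa : |ya - a ^ γ| ≤ M)
    (hMb : |yb - b ^ γ| ≤ M) :
    |((b - x) * ya + (x - a) * yb) / (b - a) - x ^ γ| ≤
      M + γ * (b - a) * (b ^ (γ - 1) - a ^ (γ - 1)) := by
  have hba : 0 < b - a := sub_pos.2 hab
  set l := (b - x) / (b - a) with hl
  set m := (x - a) / (b - a) with hm
  have hl0 : 0 ≤ l := div_nonneg (by linarith) hba.le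
  have hm0 : 0 ≤ m := div_nonneg (by linarith) hba.le
  have hlm : l + m = 1 := by rw [hl, hm]; field_simp; ring
  have hxl : b - x = l * (b - a) := by rw [hl]; field_simp
  have hxm : x - a = m * (b - a) := by rw [hm]; field_simp
  clear_value l m
  have hx : 0 ≤ x := ha.trans hax
  have hb : 0 ≤ b := hx.trans hxb
  set E := l * a ^ γ + m * b ^ γ - x ^ γ with hE
  have hE0 : 0 ≤ E := by
    have := (convexOn_rpow hγ).2 ha hb hl0 hm0 hlm
    have hcomb : l * a + m * b = x := by linear_combination (-1 : ℝ) * hxm + a * hlm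
    simp only [smul_eq_mul, hcomb] at this
    linarith
  have hE1 : E ≤ γ * (b - a) * (b ^ (γ - 1) - a ^ (γ - 1)) := by
    have hTa := rpow_tangent_le hγ ha hx
    have hTb := rpow_tangent_le hγ hb hx
    have hmono : a ^ (γ - 1) ≤ b ^ (γ - 1) := rpow_le_rpow ha hab.le (by linarith)
    have hlm1 : l * m ≤ 1 := by nlinarith
    have hK : 0 ≤ γ * (b - a) * (b ^ (γ - 1) - a ^ (γ - 1)) := by
      have : 0 ≤ b ^ (γ - 1) - a ^ (γ - 1) := by linarith
      positivity
    calc E ≤ l * m * (γ * (b - a) * (b ^ (γ - 1) - a ^ (γ - 1))) := by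
          rw [hE]
          have := add_le_add (mul_le_mul_of_nonneg_left hTa hl0) (mul_le_mul_of_nonneg_left hTb hm0)
          rw [show x - b = -(b - x) by ring, hxl, hxm] at this
          linear_combination this + x ^ γ * hlm
      _ ≤ γ * (b - a) * (b ^ (γ - 1) - a ^ (γ - 1)) := mul_le_of_le_one_left hK hlm1
  have hsplit : ((b - x) * ya + (x - a) * yb) / (b - a) - x ^ γ =
      l * (ya - a ^ γ) + m * (yb - b ^ γ) + E := by
    rw [hE, hl, hm]; field_simp; ring
  calc |((b - x) * ya + (x - a) * yb) / (b - a) - x ^ γ|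
      ≤ |l * (ya - a ^ γ)| + |m * (yb - b ^ γ)| + |E| := by
        rw [hsplit]; exact abs_add_three _ _ _
    _ = l * |ya - a ^ γ| + m * |yb - b ^ γ| + E := by
        rw [abs_mul, abs_mul, abs_of_nonneg hl0, abs_of_nonneg hm0, abs_of_nonneg hE0]
    _ ≤ l * M + m * M + γ * (b - a) * (b ^ (γ - 1) - a ^ (γ - 1)) := by gcongr
    _ = M + γ * (b - a) * (b ^ (γ - 1) - a ^ (γ - 1)) := by rw [← add_mul, hlm, one_mul]

noncomputable def oddApprox (t : ℝ) : ℕ := 2 * ⌊t / 2⌋₊ + 1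

lemma odd_oddApprox (t : ℝ) : Odd (oddApprox t) := ⟨_, rfl⟩

lemma abs_oddApprox_sub_le {t : ℝ} (ht : 0 ≤ t) : |(oddApprox t : ℝ) - t| ≤ 1 := by
  have hlo := Nat.floor_le (by linarith : 0 ≤ t / 2)
  have hhi := Nat.lt_floor_add_one (t / 2)
  rw [abs_le, oddApprox]
  push_cast
  constructor <;> linarith

/-- The value at the node `L * k` of the piecewise linear function whose first slope is `1` and
whose later slopes are chosen greedily: the odd approximation of the slope that would make the
value at the next node equal to `F` there. -/
noncomputable def greedyValue (F : ℕ → ℝ) (L : ℝ) : ℕ → ℝ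
  | 0 => 0
  | 1 => L
  | k + 2 => greedyValue F L (k + 1) + L * oddApprox ((F (k + 2) - greedyValue F L (k + 1)) / L)

noncomputable def greedySlope (F : ℕ → ℝ) (L : ℝ) : ℕ → ℕ
  | k + 2 => oddApprox ((F (k + 2) - greedyValue F L (k + 1)) / L)
  | _ => 1

lemma odd_greedySlope (F : ℕ → ℝ) (L : ℝ) (k : ℕ) : Odd (greedySlope F L k) := by
  match k with
  | 0 | 1 => exact odd_one
  | k + 2 => exact odd_oddApprox _

section greedy

variable {F : ℕ → ℝ} {L : ℝ}

lemma greedyValue_succ (k : ℕ) :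
    greedyValue F L (k + 1) = greedyValue F L k + L * greedySlope F L (k + 1) := by
  match k with
  | 0 => simp [greedyValue, greedySlope]
  | k + 1 => rfl

lemma abs_greedyValue_sub_le_of_sub_le (hL : 0 < L) {k : ℕ}
    (hstep : L ≤ F (k + 2) - F (k + 1)) (hprev : greedyValue F L (k + 1) - F (k + 1) ≤ L) :
    |greedyValue F L (k + 2) - F (k + 2)| ≤ L := by
  set t := (F (k + 2) - greedyValue F L (k + 1)) / L with ht
  have ht0 : 0 ≤ t := div_nonneg (by linarith) hL.le
  have herr : greedyValue F L (k + 2) - F (k + 2) = L * ((oddApprox t : ℝ) - t) := by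
    rw [greedyValue, ht]; field_simp; ring
  rw [herr, abs_mul, abs_of_pos hL]
  exact mul_le_of_le_one_right hL.le (abs_oddApprox_sub_le ht0)

lemma abs_greedyValue_sub_le (hL : 0 < L) (hF0 : F 0 = 0) (hF1 : L ≤ F 1)
    (hstep : ∀ k, 1 ≤ k → L ≤ F (k + 1) - F k) (k : ℕ) :
    |greedyValue F L k - F k| ≤ F 1 := by
  have hupper : ∀ k, greedyValue F L (k + 1) - F (k + 1) ≤ L := by
    intro k
    induction k with
    | zero => simp only [greedyValue]; linarith
    | succ k ih =>
      exact (le_abs_self _).trans (abs_greedyValue_sub_le_of_sub_le hL (hstep _ (by omega)) ih)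
  match k with
  | 0 => simp only [greedyValue, hF0, sub_zero, abs_zero]; linarith
  | 1 => simp only [greedyValue]; rw [abs_sub_comm, abs_of_nonneg (by linarith)]; linarith
  | k + 2 => exact (abs_greedyValue_sub_le_of_sub_le hL (hstep _ (by omega)) (hupper k)).trans hF1

end greedy

lemma abs_greedyValue_sub_rpow_le {γ L : ℝ} (hγ : 1 ≤ γ) (hL : 1 ≤ L) (k : ℕ) :
    |greedyValue (fun k => (L * k) ^ γ) L k - (L * k) ^ γ| ≤ L ^ γ := by
  have h := abs_greedyValue_sub_le (F := fun k => (L * k) ^ γ) (L := L) (by linarith)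
    (by simp [zero_rpow (by linarith : γ ≠ 0)]) (by simpa using self_le_rpow_of_one_le hL hγ)
    (fun k hk => ?_) k
  · simpa using h
  have hLk : 1 ≤ L * k := one_le_mul_of_one_le_of_one_le hL (by exact_mod_cast hk)
  push_cast
  rw [show L * ((k : ℝ) + 1) = L * k + L by ring]
  exact le_rpow_add_sub_rpow_of_one_le hγ hLk (by linarith)

def IsPiecewiseLinear (L : ℝ) (n : ℕ → ℕ) (h : ℝ → ℝ) : Prop :=
  ∀ k : ℕ, 1 ≤ k → ∀ x ∈ Set.Icc (L * ((k : ℝ) - 1)) (L * (k : ℝ)),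
    h x = h (L * ((k : ℝ) - 1)) + (n k : ℝ) * (x - L * ((k : ℝ) - 1))

namespace IsPiecewiseLinear

variable {L : ℝ} {n : ℕ → ℕ} {h : ℝ → ℝ}

lemma apply_of_mem_Icc (hpl : IsPiecewiseLinear L n h) {m : ℕ} {x : ℝ}
    (hx : x ∈ Set.Icc (L * m) (L * (m + 1))) : h x = h (L * m) + n (m + 1) * (x - L * m) := by
  have := hpl (m + 1) (by omega) x (by push_cast; simpa using hx)
  push_cast at this
  simpa using this

lemma apply_nat_mul {F : ℕ → ℝ} (hL : 0 ≤ L) (h0 : h 0 = 0)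
    (hpl : IsPiecewiseLinear L (greedySlope F L) h) (k : ℕ) : h (L * k) = greedyValue F L k := by
  induction k with
  | zero => simpa [greedyValue] using h0
  | succ k ih =>
    have hnode : L * (k + 1 : ℕ) ∈ Set.Icc (L * k) (L * (k + 1)) := by
      push_cast; exact ⟨by nlinarith, le_rfl⟩
    rw [hpl.apply_of_mem_Icc (by push_cast; exact_mod_cast hnode), ih, greedyValue_succ]
    push_cast; ring

lemma eq_interpolation (hL : 0 < L) (hpl : IsPiecewiseLinear L n h) {m : ℕ} {x : ℝ}
    (hx : x ∈ Set.Icc (L * m) (L * (m + 1))) :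
    h x = ((L * (m + 1) - x) * h (L * m) + (x - L * m) * h (L * (m + 1))) /
      (L * (m + 1) - L * m) := by
  rw [hpl.apply_of_mem_Icc hx, hpl.apply_of_mem_Icc ⟨by nlinarith, le_rfl⟩]
  field_simp
  ring

end IsPiecewiseLinear

lemma exists_mem_Icc_nat_mul {L x : ℝ} (hL : 0 < L) (hx : 0 ≤ x) :
    ∃ m : ℕ, x ∈ Set.Icc (L * m) (L * (m + 1)) :=
  ⟨⌊x / L⌋₊, by rw [← le_div_iff₀' hL]; exact Nat.floor_le (by positivity),
    by rw [← div_le_iff₀' hL]; exact (Nat.lt_floor_add_one _).le⟩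

theorem stmt_16 (γ : ℝ) (hγ : 1 < γ) :
    ∃ n : ℕ → ℕ, n 1 = 1 ∧ (∀ k : ℕ, 1 ≤ k → Odd (n k) ∧ 0 < n k) ∧
      ∀ h : ℝ → ℝ, h 0 = 0 →
        (∀ k : ℕ, 1 ≤ k → ∀ x ∈ Set.Icc (2 * π * ((k : ℝ) - 1)) (2 * π * (k : ℝ)),
          h x = h (2 * π * ((k : ℝ) - 1)) + (n k : ℝ) * (x - 2 * π * ((k : ℝ) - 1))) →
        ∃ C > 0, ∀ x : ℝ, 0 ≤ x → |h x - x ^ γ| ≤ C * (x ^ (γ - 2) + 1) := by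
  set L := 2 * π
  have hL : 1 ≤ L := by linarith [pi_gt_three]
  refine ⟨greedySlope (fun k => (L * k) ^ γ) L, rfl,
    fun k _ => ⟨odd_greedySlope _ _ k, (odd_greedySlope _ _ k).pos⟩, fun h h0 hpl => ?_⟩
  have hnode (k : ℕ) : |h (L * k) - (L * k) ^ γ| ≤ L ^ γ := by
    rw [IsPiecewiseLinear.apply_nat_mul (by linarith) h0 hpl]
    exact abs_greedyValue_sub_rpow_le hγ.le hL k
  obtain ⟨C, hC0, hC⟩ :=
    exists_rpow_add_sub_rpow_le (by linarith : 0 < γ - 1) (by linarith : 0 ≤ L)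
  refine ⟨L ^ γ + γ * L * C + 1, by positivity, fun x hx => ?_⟩
  obtain ⟨m, hxm⟩ := exists_mem_Icc_nat_mul (by linarith : (0 : ℝ) < L) hx
  have hnext := hnode (m + 1)
  push_cast at hnext
  have hinterp := abs_interpolation_sub_rpow_le hγ.le (by positivity) hxm.1 hxm.2
    (by nlinarith) (hnode m) hnext
  rw [← IsPiecewiseLinear.eq_interpolation (by linarith) hpl hxm,
    show L * (m + 1) = L * m + L by ring, add_sub_cancel_left] at hinterp
  have hgrowth := hC (L * m) x (by positivity) hxm.1
  rw [show γ - 1 - 1 = γ - 2 by ring] at hgrowth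
  have hX := rpow_nonneg hx (γ - 2)
  calc |h x - x ^ γ| ≤ L ^ γ + γ * L * (C * (x ^ (γ - 2) + 1)) := by
        refine hinterp.trans ?_
        gcongr
    _ ≤ (L ^ γ + γ * L * C + 1) * (x ^ (γ - 2) + 1) := by
        nlinarith [rpow_nonneg (by linarith : (0 : ℝ) ≤ L) γ]
end
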